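/- Let d ≥ 3, t ∈ (−1,1), t ≠ −1/(d−1). Define A₁,…,A_d ∈ M_d(ℂ) by (A_m)_{mm} = t, (A_m)_{jk} = 0 when exactly one of j,k equals m, (A_m)_{jj} = (3−d)/(d−1) for j ≠ m, and (A_m)_{jk} = 2/(d−1) for j ≠ k with j,k ≠ m. Then each A_m is self-adjoint (A_m* = A_m) and the family of d² matrices {A_m A_n}_{m,n=1}^d is linearly independent over ℂ. -/

import Mathlib

/-!
With `e = e_m`, `v = 𝟙 - e_m` and `c = 2/(d-1)`, `A_m = c v vᵀ + (t+1) e eᵀ - 1`: on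
`ℂ e_m ⊕ e_m^⊥` it is `t ⊕ (c v vᵀ - 1)`, and `c v vᵀ - 1` is `W_{d-1}` exactly when `c (d-1) = 2`.
Expanding, the `(j,k)` entry of `∑ g_{mn} A_m A_n` is `-c(c+2t) g_{jk}` plus terms involving only
the diagonal of `g`, its row and column sums, its trace and its total. If the combination
vanishes, summing its entries over rows, columns and the diagonal gives linear equations for
these aggregates which, for the given range of `t`, force the total and the trace to vanish and
row sums to equal column sums; then row sums and the diagonal vanish, and what remains of the
`(j,k)` entry is `-c(c+2t) g_{jk} = 0`.
-/

open Matrix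

noncomputable section

def keyMatrix (d : ℕ) (t : ℝ) (m : Fin d) : Matrix (Fin d) (Fin d) ℂ :=
  Matrix.of fun j k =>
    if j = m ∧ k = m then (t : ℂ)
    else if j = m ∨ k = m then 0
    else if j = k then (((3 - (d : ℝ)) / ((d : ℝ) - 1) : ℝ) : ℂ)
    else (((2 : ℝ) / ((d : ℝ) - 1) : ℝ) : ℂ)

section CommRing

variable {n R : Type*} [DecidableEq n] [CommRing R]

def keyForm (c t : R) (m : n) : Matrix n n R :=
  c • vecMulVec (1 - Pi.single m 1) (1 - Pi.single m 1)
    + (t + 1) • vecMulVec (Pi.single m 1) (Pi.single m 1) - 1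

variable [Fintype n]

def keyCombEntry (c t : R) (g : n → n → R) (j k : n) : R :=
  -c * (c + 2 * t) * g j k + c * (t + c) * (∑ l, g j l + ∑ l, g l k)
    + c * (∑ l, g k l + ∑ l, g l j) - (t + 1 + c) * c * (g j j + g k k)
    + c ^ 2 * (∑ l, g l l - ∑ l, ∑ l', g l l')
    + if j = k then
        (t + 1 + c) ^ 2 * g j j - (t + 1 + c) * (∑ l, g j l + ∑ l, g l j) + ∑ l, ∑ l', g l l'
      else 0

variable {c : R} (t : R)

theorem sum_smul_keyForm_mul_keyForm_apply (hc : c * (Fintype.card n - 1) = 2)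
    (g : n → n → R) (j k : n) :
    (∑ m, ∑ m', g m m' • (keyForm c t m * keyForm c t m')) j k = keyCombEntry c t g j k := by
  simp only [Matrix.sum_apply, Matrix.smul_apply, smul_eq_mul, keyForm, sub_mul, add_mul, mul_sub,
    mul_add, smul_mul_smul_comm, vecMulVec_mul_vecMulVec, Matrix.mul_one, Matrix.one_mul, mul_smul]
  simp only [dotProduct_sub, sub_dotProduct, one_dotProduct_one, single_dotProduct, Pi.one_apply,
    mul_one, dotProduct_single, Pi.sub_apply, Pi.single_apply, vecMulVec_smul, one_mul, ite_smul,
    one_smul, zero_smul, Matrix.sub_apply, Matrix.add_apply, Matrix.smul_apply, vecMulVec_apply,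
    mul_sub, mul_ite, mul_zero, smul_eq_mul, ite_apply, Pi.zero_apply, Matrix.one_apply, mul_add,
    Finset.sum_sub_distrib, Finset.sum_add_distrib, ← Finset.sum_mul, Finset.sum_ite_eq',
    Finset.mem_univ, if_true, Finset.sum_ite_irrel, Finset.sum_const_zero, Finset.sum_ite_eq,
    keyCombEntry, neg_mul]
  rcases eq_or_ne j k with rfl | hjk
  · simp only [if_true]
    linear_combination c * (∑ l, ∑ l', g l l' - ∑ l, g j l - ∑ l, g l j + g j j) * hc
  · simp only [hjk, hjk.symm, if_false]
    linear_combination c * (∑ l, ∑ l', g l l' - ∑ l, g j l - ∑ l, g l k + g j k) * hc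

theorem sum_keyCombEntry_row (hc : c * (Fintype.card n - 1) = 2) (g : n → n → R) (j : n) :
    ∑ k, keyCombEntry c t g j k =
      (t - 1) * ((1 - c) * ∑ l, g j l - ∑ l, g l j + c * (∑ l, ∑ l', g l l' - ∑ l, g l l)
        + (t + 1 + c) * g j j) + ∑ l, ∑ l', g l l' := by
  simp only [keyCombEntry, Finset.sum_add_distrib, Finset.sum_sub_distrib, ← Finset.mul_sum,
    Finset.sum_ite_eq, Finset.mem_univ, if_true, Finset.sum_const, Finset.card_univ, nsmul_eq_mul]
  rw [Finset.sum_comm (f := fun x y => g y x)]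
  linear_combination ((c + t) * ∑ l, g j l + ∑ l, g l j - c * (∑ l, ∑ l', g l l' - ∑ l, g l l)
    - (t + 1 + c) * g j j) * hc

theorem sum_keyCombEntry_col (hc : c * (Fintype.card n - 1) = 2) (g : n → n → R) (k : n) :
    ∑ j, keyCombEntry c t g j k =
      (t - 1) * ((1 - c) * ∑ l, g l k - ∑ l, g k l + c * (∑ l, ∑ l', g l l' - ∑ l, g l l)
        + (t + 1 + c) * g k k) + ∑ l, ∑ l', g l l' := by
  simp only [keyCombEntry, Finset.sum_add_distrib, Finset.sum_sub_distrib, ← Finset.mul_sum,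
    Finset.sum_ite_eq', Finset.mem_univ, if_true, Finset.sum_const, Finset.card_univ, nsmul_eq_mul]
  rw [Finset.sum_comm (f := fun x y => g y x)]
  linear_combination ((c + t) * ∑ l, g l k + ∑ l, g k l - c * (∑ l, ∑ l', g l l' - ∑ l, g l l)
    - (t + 1 + c) * g k k) * hc

theorem sum_sum_keyCombEntry (hc : c * (Fintype.card n - 1) = 2) (g : n → n → R) :
    ∑ j, ∑ k, keyCombEntry c t g j k =
      (Fintype.card n + 2 * t - 2) * ∑ l, ∑ l', g l l' + (t - 1) ^ 2 * ∑ l, g l l := by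
  simp only [sum_keyCombEntry_row t hc, Finset.sum_add_distrib, Finset.sum_sub_distrib,
    ← Finset.mul_sum, Finset.sum_const, Finset.card_univ, nsmul_eq_mul]
  rw [Finset.sum_comm (f := fun x y => g y x)]
  linear_combination (t - 1) * (∑ l, ∑ l', g l l' - ∑ l, g l l) * hc

theorem sum_sum_keyCombEntry_sub_sum_diag (hc : c * (Fintype.card n - 1) = 2) (g : n → n → R) :
    ∑ j, ∑ k, keyCombEntry c t g j k - ∑ j, keyCombEntry c t g j j =
      (2 - c) * (c + 2 * t) * (∑ l, ∑ l', g l l' - ∑ l, g l l) := by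
  rw [sum_sum_keyCombEntry t hc]
  simp only [keyCombEntry, if_true, Finset.sum_add_distrib, Finset.sum_sub_distrib,
    ← Finset.mul_sum, Finset.sum_const, Finset.card_univ, nsmul_eq_mul]
  rw [Finset.sum_comm (f := fun x y => g y x)]
  linear_combination c * (∑ l, ∑ l', g l l' - ∑ l, g l l) * hc

end CommRing

section Field

variable {n K : Type*} [Fintype n] [DecidableEq n] [Field K] {c t : K} {g : n → n → K}

theorem sum_sum_eq_zero_of_keyCombEntry_eq_zero (hc : c * (Fintype.card n - 1) = 2)
    (hc2 : c ≠ 2) (hct : c + 2 * t ≠ 0) (hdt : (Fintype.card n : K) - 1 + t ^ 2 ≠ 0)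
    (h : ∀ j k, keyCombEntry c t g j k = 0) :
    ∑ l, ∑ l', g l l' = 0 ∧ ∑ l, g l l = 0 := by
  have htotal := sum_sum_keyCombEntry t hc g
  have hoff := sum_sum_keyCombEntry_sub_sum_diag t hc g
  simp only [h, Finset.sum_const_zero, sub_zero] at htotal hoff
  have hTD : ∑ l, ∑ l', g l l' = ∑ l, g l l := sub_eq_zero.mp <|
    (mul_eq_zero.mp hoff.symm).resolve_left (mul_ne_zero (sub_ne_zero.mpr hc2.symm) hct)
  have hT : ∑ l, ∑ l', g l l' = 0 := by
    refine (mul_eq_zero.mp ?_).resolve_left hdt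
    linear_combination -htotal + (t - 1) ^ 2 * hTD
  exact ⟨hT, hTD ▸ hT⟩

theorem sum_row_eq_sum_col_of_keyCombEntry_eq_zero (hc : c * (Fintype.card n - 1) = 2)
    (hc2 : c ≠ 2) (ht1 : t ≠ 1) (h : ∀ j k, keyCombEntry c t g j k = 0) (j : n) :
    ∑ l, g j l = ∑ l, g l j := by
  have hrow := sum_keyCombEntry_row t hc g j
  have hcol := sum_keyCombEntry_col t hc g j
  simp only [h, Finset.sum_const_zero] at hrow hcol
  have : (t - 1) * (2 - c) * (∑ l, g j l - ∑ l, g l j) = 0 := by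
    linear_combination hcol - hrow
  exact sub_eq_zero.mp ((mul_eq_zero.mp this).resolve_left
    (mul_ne_zero (sub_ne_zero.mpr ht1) (sub_ne_zero.mpr hc2.symm)))

theorem eq_zero_of_keyCombEntry_eq_zero (hc : c * (Fintype.card n - 1) = 2)
    (hc0 : c ≠ 0) (hc2 : c ≠ 2) (hct : c + 2 * t ≠ 0) (ht1 : t ≠ 1) (ha : t + 1 + c ≠ 0)
    (hdt : (Fintype.card n : K) - 1 + t ^ 2 ≠ 0)
    (hcub : (t + 1) * ((3 * c - 2) * t + 2 * c ^ 2 - c - 2) ≠ 0)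
    (h : ∀ j k, keyCombEntry c t g j k = 0) : g = 0 := by
  obtain ⟨hT, hD⟩ := sum_sum_eq_zero_of_keyCombEntry_eq_zero hc hc2 hct hdt h
  have hrc := sum_row_eq_sum_col_of_keyCombEntry_eq_zero hc hc2 ht1 h
  have hdiag : ∀ j, (t + 1 + c) * g j j = c * ∑ l, g j l := by
    intro j
    have hrow := sum_keyCombEntry_row t hc g j
    simp only [h, Finset.sum_const_zero, ← hrc j, hT, hD] at hrow
    have : (t - 1) * ((t + 1 + c) * g j j - c * ∑ l, g j l) = 0 := by linear_combination -hrow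
    exact sub_eq_zero.mp ((mul_eq_zero.mp this).resolve_left (sub_ne_zero.mpr ht1))
  have hrow0 : ∀ j, ∑ l, g j l = 0 := by
    intro j
    have hjj := h j j
    simp only [keyCombEntry, if_true, ← hrc j, hT, hD] at hjj
    refine (mul_eq_zero.mp ?_).resolve_left hcub
    linear_combination (t + 1 + c) * hjj - ((t + 1) ^ 2 - 2 * c ^ 2 - 2 * c * t) * hdiag j
  have hdiag0 : ∀ j, g j j = 0 := fun j =>
    (mul_eq_zero.mp ((hdiag j).trans (by rw [hrow0 j, mul_zero]))).resolve_left ha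
  funext j k
  have hjk := h j k
  simp only [keyCombEntry, hrow0, ← hrc, hdiag0, Finset.sum_const_zero, mul_zero, add_zero,
    sub_zero, ite_self] at hjk
  refine (mul_eq_zero.mp ?_).resolve_left (mul_ne_zero hc0 hct)
  linear_combination -hjk

end Field

theorem keyForm_mul_keyForm_linearIndependent {n : Type*} [Fintype n] [DecidableEq n] {c t : ℝ}
    (hc : c * (Fintype.card n - 1) = 2) (hc0 : 0 < c) (hc1 : c ≤ 1) (ht : t ∈ Set.Ioo (-1 : ℝ) 1)
    (hct : c + 2 * t ≠ 0) :
    LinearIndependent ℂ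
      (fun p : n × n => keyForm (c : ℂ) (t : ℂ) p.1 * keyForm (c : ℂ) (t : ℂ) p.2) := by
  obtain ⟨ht0, ht1⟩ := ht
  have hcub : (3 * c - 2) * t + 2 * c ^ 2 - c - 2 < 0 := by
    rcases le_or_gt (3 * c) 2 with h | h
    · nlinarith [mul_nonpos_of_nonpos_of_nonneg (by linarith : 3 * c - 2 ≤ 0)
        (by linarith : (0 : ℝ) ≤ t + 1)]
    · nlinarith [mul_neg_of_pos_of_neg (by linarith : 0 < 3 * c - 2) (by linarith : t - 1 < 0)]
  have hdt : (Fintype.card n : ℝ) - 1 + t ^ 2 ≠ 0 := by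
    have : 0 < (Fintype.card n : ℝ) - 1 := by nlinarith
    positivity
  have hcC : (c : ℂ) * (Fintype.card n - 1) = 2 := by exact_mod_cast hc
  rw [Fintype.linearIndependent_iff]
  intro g hg p
  have h : ∀ j k, keyCombEntry (c : ℂ) t (fun m m' => g (m, m')) j k = 0 := by
    intro j k
    rw [← sum_smul_keyForm_mul_keyForm_apply _ hcC, ← Fintype.sum_prod_type', hg, Matrix.zero_apply]
  have hg0 := eq_zero_of_keyCombEntry_eq_zero hcC (by exact_mod_cast hc0.ne')
    (by exact_mod_cast (by linarith : c ≠ 2)) (by exact_mod_cast hct)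
    (by exact_mod_cast ht1.ne) (by exact_mod_cast (by linarith : t + 1 + c ≠ 0))
    (by exact_mod_cast hdt) (by exact_mod_cast mul_ne_zero (by linarith : t + 1 ≠ 0) hcub.ne) h
  exact congrFun (congrFun hg0 p.1) p.2

theorem keyMatrix_conjTranspose (d : ℕ) (t : ℝ) (m : Fin d) :
    (keyMatrix d t m)ᴴ = keyMatrix d t m := by
  ext j k
  simp only [keyMatrix, conjTranspose_apply, of_apply, and_comm (a := k = m),
    or_comm (a := k = m), eq_comm (a := k) (b := j)]
  split_ifs <;> simp

theorem keyMatrix_eq_keyForm (d : ℕ) (t : ℝ) :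
    keyMatrix d t = keyForm (((2 : ℝ) / ((d : ℝ) - 1) : ℝ) : ℂ) (t : ℂ) := by
  ext m j k
  simp only [keyMatrix, keyForm, of_apply, Matrix.sub_apply, Matrix.add_apply, Matrix.smul_apply,
    vecMulVec_apply, one_apply, Pi.sub_apply, Pi.one_apply, Pi.single_apply, smul_eq_mul]
  by_cases hkm : k = m
  · subst hkm
    by_cases hjk : j = k <;> simp [hjk]
  by_cases hjm : j = m
  · subst hjm
    simp [hkm, Ne.symm hkm]
  by_cases hjk : j = k
  · subst hjk
    have hd : (d : ℂ) - 1 ≠ 0 := by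
      rw [sub_ne_zero, Ne, Nat.cast_eq_one]
      rintro rfl
      exact hkm (Subsingleton.elim _ _)
    simp only [hkm, and_self, if_false, or_self, if_true, Complex.ofReal_div, Complex.ofReal_sub,
      Complex.ofReal_ofNat, Complex.ofReal_natCast, Complex.ofReal_one, sub_zero, mul_one, mul_zero,
      add_zero]
    field_simp
    ring
  · simp [hjm, hkm, hjk]

/-- For `d ≥ 3`, `t ∈ (−1,1)`, `t ≠ −1/(d−1)`: each `A_m` is self-adjoint and the family
of `d²` matrices `{A_m A_n}` is linearly independent over `ℂ`. -/
theorem keyMatrix_selfAdjoint_and_products_linearIndependent (d : ℕ) (hd : 3 ≤ d)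
    (t : ℝ) (ht : t ∈ Set.Ioo (-1 : ℝ) 1) (ht' : t ≠ -1 / ((d : ℝ) - 1)) :
    (∀ m, (keyMatrix d t m)ᴴ = keyMatrix d t m) ∧
    LinearIndependent ℂ
      (fun p : Fin d × Fin d => keyMatrix d t p.1 * keyMatrix d t p.2) := by
  refine ⟨keyMatrix_conjTranspose d t, ?_⟩
  have hd1 : (2 : ℝ) ≤ d - 1 := by
    have : (3 : ℝ) ≤ d := by exact_mod_cast hd
    linarith
  rw [keyMatrix_eq_keyForm]
  refine keyForm_mul_keyForm_linearIndependent ?_ (by positivity)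
    ((div_le_one (by linarith)).mpr hd1) ht ?_
  · rw [Fintype.card_fin]
    field_simp
  · intro h
    apply ht'
    field_simp at h ⊢
    linarith

end
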